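/- Let (C',φ) be the branch shift of x to y applied to a tree position (C,φ) of G, where x and y are nonadjacent edges of C. Let Q be the branch shift quotient graph of G induced from x, y, and (C,φ), and let Q' be the branch shift quotient graph of G induced from f_2' and x' and (C',φ), where f_2' denotes the edge f_2 in its new position after the shift and x' denotes the edge x in its new position after the shift. Then Q' = Q; more precisely, the parts satisfy P_0' = P_0, P_{i+2}' = P_{i+2}, P_{i+1}' = P_1, and P_t' = P_{t+1} for 1 ≤ t ≤ i, so the two partitions of V are equal and the quotient graphs coincide. -/

import Mathlib

attribute [local instance] Classical.propDecidable

open SimpleGraph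

/-! ### Weighted graphs -/

/-- Total weight `w(A,B)` between two vertex sets. -/
noncomputable def setW {V : Type*} [Fintype V] (w : V → V → ℝ) (A B : Set V) : ℝ :=
  ∑ a ∈ A.toFinset, ∑ b ∈ B.toFinset, w a b

/-- The weight of an undirected edge of the weighted graph. -/
noncomputable def sym2w {V : Type*} (w : V → V → ℝ) : Sym2 V → ℝ :=
  Sym2.lift ⟨fun a b => (w a b + w b a) / 2, fun a b => by ring⟩

/-! ### 3-Cayley trees and tree positions -/

/-- A boundary (leaf) vertex of a tree. -/
def IsLeaf {W : Type*} (C : SimpleGraph W) (z : W) : Prop := (C.neighborSet z).ncard = 1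

/-- A 3-Cayley tree: a tree all of whose vertices have degree 1 (boundary) or 3 (interior). -/
def IsCayley {W : Type*} (C : SimpleGraph W) : Prop :=
  C.IsTree ∧ ∀ z : W, (C.neighborSet z).ncard = 1 ∨ (C.neighborSet z).ncard = 3

/-- `(C, φ)` is a tree position for a graph with vertex set `V`. -/
def IsTreePosition {V W : Type*} (C : SimpleGraph W) (φ : V → W) : Prop :=
  IsCayley C ∧ Function.Injective φ ∧ Set.range φ = {z | IsLeaf C z}

/-- The edge `f` of `C` lies on a simple path from `a` to `b` (in a tree, THE simple path). -/
def passesThrough {W : Type*} (C : SimpleGraph W) (f : Sym2 W) (a b : W) : Prop :=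
  ∃ p : C.Walk a b, p.IsPath ∧ f ∈ p.edges

/-- `R(f)`: the set of edges of the weighted graph that pass through the edge `f` of `C`. -/
def REdges {V W : Type*} (w : V → V → ℝ) (C : SimpleGraph W) (φ : V → W) (f : Sym2 W) :
    Set (Sym2 V) :=
  {e | ∃ u v : V, e = s(u, v) ∧ w u v ≠ 0 ∧ passesThrough C f (φ u) (φ v)}

/-- The width `b(f)` of an edge `f` of `C`: total weight of the edges of `G` through `f`. -/
noncomputable def bWidth {V W : Type*} [Fintype V] (w : V → V → ℝ) (C : SimpleGraph W)
    (φ : V → W) (f : Sym2 W) : ℝ :=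
  ∑ e ∈ (REdges w C φ f).toFinset, sym2w w e

/-- The adjacency weight `a(e,g)`: total weight of edges of `G` through both `e` and `g`. -/
noncomputable def adjW {V W : Type*} [Fintype V] (w : V → V → ℝ) (C : SimpleGraph W)
    (φ : V → W) (e g : Sym2 W) : ℝ :=
  ∑ e' ∈ (REdges w C φ e ∩ REdges w C φ g).toFinset, sym2w w e'

/-- The slope `s(e,g) = w(R(g) \ R(e)) - w(R(g) ∩ R(e))`. -/
noncomputable def slopeW {V W : Type*} [Fintype V] (w : V → V → ℝ) (C : SimpleGraph W)
    (φ : V → W) (e g : Sym2 W) : ℝ :=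
  (∑ e' ∈ (REdges w C φ g \ REdges w C φ e).toFinset, sym2w w e') - adjW w C φ e g

/-- `C(f;g)`: vertex set of the subtree obtained by cutting `f` that contains the edge `g`. -/
def sideWith {W : Type*} (C : SimpleGraph W) (f g : Sym2 W) : Set W :=
  {z | ∃ a, a ∈ g ∧ (C.deleteEdges {f}).Reachable a z}

/-- `C(f;ḡ)`: vertex set of the subtree obtained by cutting `f` that does not contain `g`. -/
def sideOpp {W : Type*} (C : SimpleGraph W) (f g : Sym2 W) : Set W := (sideWith C f g)ᶜ

/-! ### TILO orderings of a weighted graph -/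

/-- `A_t`: the initial segment of an ordering. -/
def ordSet {V : Type*} (o : V → ℕ) (t : ℕ) : Set V := {v | o v ≤ t}

/-- The width `b_t` of an ordering. -/
noncomputable def ordWidth {V : Type*} [Fintype V] (w : V → V → ℝ) (o : V → ℕ) (t : ℕ) : ℝ :=
  setW w (ordSet o t) (ordSet o t)ᶜ

/-- The slope `s_{t,k}` of an ordering, with `vk` the vertex at position `k`. -/
noncomputable def ordSlope {V : Type*} [Fintype V] (w : V → V → ℝ) (o : V → ℕ) (t : ℕ)
    (vk : V) : ℝ :=
  setW w {vk} ((ordSet o t)ᶜ \ {vk}) - setW w {vk} (ordSet o t \ {vk})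

/-- The shift from position `a` to position `b`: compose the ordering with the cyclic
permutation of the block of positions between `a` and `b` sending `a` to `b`. -/
def shiftFun {V : Type*} (a b : ℕ) (o : V → ℕ) : V → ℕ := fun v =>
  if o v = a then b
  else if a < o v ∧ o v ≤ b then o v - 1
  else if b ≤ o v ∧ o v < a then o v + 1
  else o v

/-- The multiset of widths of an ordering, sorted in nonincreasing order. -/
noncomputable def ordWidthList {V : Type*} [Fintype V] (w : V → V → ℝ) (N : ℕ)
    (o : V → ℕ) : List ℝ :=
  ((List.range N).map (ordWidth w o)).insertionSort (· ≥ ·)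

/-- Strict lexicographic comparison of sorted width lists. -/
def lexLess (l₁ l₂ : List ℝ) : Prop := List.Lex (· < ·) l₁ l₂

/-- A TILO ordering is weakly reducible when some shift strictly decreases its width. -/
def OrdWeaklyReducible {V : Type*} [Fintype V] (w : V → V → ℝ) (N : ℕ) (o : V → ℕ) : Prop :=
  ∃ a b : ℕ, a < N ∧ b < N ∧ a ≠ b ∧
    lexLess (ordWidthList w N (shiftFun a b o)) (ordWidthList w N o)

/-! ### Branch shift data -/

/-- The data of a pair of nonadjacent edges `x`, `y` of a tree `C` together with the unique
simple path `p 1, …, p i` from `x` to `y`, the extremal third edges `p 0` (at the common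
endpoint of `x` and `p 1`, other endpoint `fv`) and `p (i+1)` (at the common endpoint of `y`
and `p i`, other endpoint `gv`), and the third edges `fE t` at the common endpoint of
`p (t-1)` and `p t` for `2 ≤ t ≤ i`.  The path visits the vertices
`x0, vs 0, vs 1, …, vs i, y1` where `x = s(x0, vs 0)` and `y = s(vs i, y1)`. -/
structure BranchData {W : Type*} (C : SimpleGraph W) (x y : Sym2 W) where
  i : ℕ
  hi1 : 1 ≤ i
  vs : ℕ → W
  x0 : W
  y1 : W
  fv : W
  gv : W
  p : ℕ → Sym2 W
  fE : ℕ → Sym2 W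
  hx : x ∈ C.edgeSet
  hy : y ∈ C.edgeSet
  hnonadj : ∀ z : W, ¬(z ∈ x ∧ z ∈ y)
  hxe : x = s(x0, vs 0)
  hye : y = s(vs i, y1)
  hpe : ∀ t, 1 ≤ t → t ≤ i → p t = s(vs (t - 1), vs t)
  hpedge : ∀ t, 1 ≤ t → t ≤ i → p t ∈ C.edgeSet
  hvsinj : ∀ t t', t ≤ i → t' ≤ i → vs t = vs t' → t = t'
  hx0 : ∀ t, t ≤ i → x0 ≠ vs t
  hy1 : ∀ t, t ≤ i → y1 ≠ vs t
  hp0 : p 0 = s(vs 0, fv)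
  hp0edge : p 0 ∈ C.edgeSet
  hp0x : p 0 ≠ x
  hp0p1 : p 0 ≠ p 1
  hpi1 : p (i + 1) = s(vs i, gv)
  hpi1edge : p (i + 1) ∈ C.edgeSet
  hpi1y : p (i + 1) ≠ y
  hpi1pi : p (i + 1) ≠ p i
  hfE : ∀ t, 2 ≤ t → t ≤ i →
    fE t ∈ C.edgeSet ∧ vs (t - 1) ∈ fE t ∧ fE t ≠ p (t - 1) ∧ fE t ≠ p t

/-- The parts `P 0, …, P (i+2)` of the partition of the vertices of `G` induced by the
branch shift data. -/
def BranchData.part {V W : Type*} {C : SimpleGraph W} {x y : Sym2 W}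
    (d : BranchData C x y) (φ : V → W) : ℕ → Set V := fun t =>
  if t = 0 then φ ⁻¹' (sideOpp C (d.p 0) y)
  else if t = 1 then φ ⁻¹' (sideOpp C x y)
  else if t ≤ d.i then φ ⁻¹' (sideOpp C (d.fE t) y)
  else if t = d.i + 1 then φ ⁻¹' (sideOpp C y x)
  else φ ⁻¹' (sideOpp C (d.p (d.i + 1)) y)

/-- The tree `C'` obtained by the branch shift of `x` to `y`: detach `e = p 1` from
`v = vs 1` and reattach it at `s = vs i`, reattach the third edge `p 0` at `u = vs 0` to
`v = vs 1`, and reattach the third edge `p (i+1)` at `s = vs i` to `u = vs 0`. -/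
def BranchData.shifted {W : Type*} {C : SimpleGraph W} {x y : Sym2 W}
    (d : BranchData C x y) : SimpleGraph W :=
  SimpleGraph.fromEdgeSet
    ((C.edgeSet \ {d.p 1, d.p 0, d.p (d.i + 1)}) ∪
      {s(d.vs 0, d.vs d.i), s(d.vs 1, d.fv), s(d.vs 0, d.gv)})

/-- The weight function of the branch shift quotient graph `Q`: vertex `u_j` corresponds to
the part `P j`, and the weight of the edge `(u_j, u_l)` is `w(P j, P l)`. -/
noncomputable def BranchData.qw {V W : Type*} [Fintype V] {C : SimpleGraph W} {x y : Sym2 W}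
    (d : BranchData C x y) (w : V → V → ℝ) (φ : V → W) :
    Fin (d.i + 3) → Fin (d.i + 3) → ℝ :=
  fun j l => if j = l then 0 else setW w (d.part φ j) (d.part φ l)

/-- The multiset of widths of the edges of a tree position, sorted in nonincreasing order. -/
noncomputable def treeWidthList {V W : Type*} [Fintype V] [Fintype W] (w : V → V → ℝ)
    (C : SimpleGraph W) (φ : V → W) : List ℝ :=
  ((C.edgeSet.toFinset.val.map (bWidth w C φ)).toList).insertionSort (· ≥ ·)

/-- A tree position is weakly reducible when some branch shift strictly decreases its
width; otherwise it is strongly irreducible (thin). -/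
def TPWeaklyReducible {V W : Type*} [Fintype V] [Fintype W] (w : V → V → ℝ)
    (C : SimpleGraph W) (φ : V → W) : Prop :=
  ∃ (x y : Sym2 W) (d : BranchData C x y),
    lexLess (treeWidthList w d.shifted φ) (treeWidthList w C φ)

/-! ### Pinch clusters -/

/-- The boundary weight of a set of vertices. -/
noncomputable def boundaryW {V : Type*} [Fintype V] (w : V → V → ℝ) (A : Set V) : ℝ :=
  setW w A Aᶜ

/-- `A` is a pinch cluster: whenever adding the vertices `v 1, …, v m` to `A` (resp. removing
them from `A`) produces a set with strictly smaller boundary, some proper initial segment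
`v 1, …, v k` added (resp. removed) produces a set with strictly larger boundary. -/
def IsPinchCluster {V : Type*} [Fintype V] (w : V → V → ℝ) (A : Set V) : Prop :=
  ∀ (m : ℕ) (v : ℕ → V),
    (boundaryW w (A ∪ v '' Set.Icc 1 m) < boundaryW w A →
      ∃ k, 1 ≤ k ∧ k < m ∧ boundaryW w A < boundaryW w (A ∪ v '' Set.Icc 1 k)) ∧
    (boundaryW w (A \ v '' Set.Icc 1 m) < boundaryW w A →
      ∃ k, 1 ≤ k ∧ k < m ∧ boundaryW w A < boundaryW w (A \ v '' Set.Icc 1 k))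

/-- `e` is a local minimum of the tree position: each endpoint of `e` is shared with an edge
of strictly greater width whose second endpoint is not a boundary vertex. -/
def IsLocalMinEdge {V W : Type*} [Fintype V] (w : V → V → ℝ) (C : SimpleGraph W)
    (φ : V → W) (e : Sym2 W) : Prop :=
  ∀ z ∈ e, ∃ f ∈ C.edgeSet, z ∈ f ∧ f ≠ e ∧
    bWidth w C φ e < bWidth w C φ f ∧ ∀ z' ∈ f, z' ≠ z → ¬ IsLeaf C z'

/-!
The shifted tree `C'` arises from `C` by moving three edges: `C` and `C'` share the forest
`D = C - {p 0, p 1, p (i+1)}`, and the moved edges only touch `vs 0, vs 1, vs i, fv, gv`.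
Counting edges shows that `C'` is again a tree, and along the new path `vs 1, …, vs i, vs 0` its
degrees are still at most three. In such a tree the branch data of two edges is unique (the path
between them is unique, and so are the third edges at its vertices), so it suffices to compute
the parts for this one path. Each part is the component of the outer endpoint of an edge after
cutting that edge; this component misses the moved edges, so it is the same component of `D` in
`C` and in `C'`.
-/

theorem List.isChain_map_range {α : Type*} {r : α → α → Prop} {f : ℕ → α} {n : ℕ}
    (hf : ∀ k < n, r (f k) (f (k + 1))) : ((List.range (n + 1)).map f).IsChain r := by
  rw [List.isChain_map, List.isChain_range]
  exact fun m hm => hf m (by omega)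

theorem List.nodup_map_range_of_injOn {α : Type*} {f : ℕ → α} {n : ℕ}
    (hf : Set.InjOn f (Set.Iic n)) : ((List.range (n + 1)).map f).Nodup :=
  List.nodup_range.map_on fun a ha b hb hab =>
    hf (by simpa [Nat.lt_succ_iff] using ha) (by simpa [Nat.lt_succ_iff] using hb) hab

theorem Set.encard_le_of_subset_sdiff_union {α : Type*} {s t u v : Set α} (h : s ⊆ (t \ u) ∪ v)
    (hu : u ⊆ t) (hv : v.encard ≤ u.encard) : s.encard ≤ t.encard :=
  calc s.encard ≤ ((t \ u) ∪ v).encard := Set.encard_le_encard h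
    _ ≤ (t \ u).encard + v.encard := Set.encard_union_le _ _
    _ ≤ (t \ u).encard + u.encard := by gcongr
    _ = t.encard := Set.encard_sdiff_add_encard_of_subset hu

theorem Set.encard_le_three_of_ncard {α : Type*} {s : Set α} (h : s.ncard = 1 ∨ s.ncard = 3) :
    s.encard ≤ 3 := by
  rw [← (Set.finite_of_ncard_ne_zero (by omega)).cast_ncard_eq]
  rcases h with h | h <;> simp [h]

theorem setOf_exists_eq_of_rotate {α : Type*} {P Q : ℕ → α} {n : ℕ} (h0 : Q 0 = P 0)
    (hlast : Q (n + 2) = P (n + 2)) (hrot : Q (n + 1) = P 1)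
    (hshift : ∀ t, 1 ≤ t → t ≤ n → Q t = P (t + 1)) :
    {A | ∃ t ≤ n + 2, A = Q t} = {A | ∃ t ≤ n + 2, A = P t} := by
  ext A
  constructor
  · rintro ⟨t, ht, rfl⟩
    obtain rfl | h1 | rfl | rfl : t = 0 ∨ (1 ≤ t ∧ t ≤ n) ∨ t = n + 1 ∨ t = n + 2 := by omega
    exacts [⟨0, by omega, h0⟩, ⟨t + 1, by omega, hshift t h1.1 h1.2⟩, ⟨1, by omega, hrot⟩,
      ⟨n + 2, le_rfl, hlast⟩]
  · rintro ⟨t, ht, rfl⟩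
    obtain rfl | rfl | h2 | rfl : t = 0 ∨ t = 1 ∨ (2 ≤ t ∧ t ≤ n + 1) ∨ t = n + 2 := by omega
    · exact ⟨0, by omega, h0.symm⟩
    · exact ⟨n + 1, by omega, hrot.symm⟩
    · refine ⟨t - 1, by omega, ?_⟩
      rw [hshift (t - 1) (by omega) (by omega), Nat.sub_add_cancel (by omega)]
    · exact ⟨n + 2, le_rfl, hlast.symm⟩

namespace SimpleGraph

variable {W : Type*} {G H : SimpleGraph W}

/-! ### Paths in acyclic graphs -/

theorem IsAcyclic.list_eq_of_isChain (hG : G.IsAcyclic) {l₁ l₂ : List W} (hne₁ : l₁ ≠ [])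
    (hne₂ : l₂ ≠ []) (hc₁ : l₁.IsChain G.Adj) (hc₂ : l₂.IsChain G.Adj) (hn₁ : l₁.Nodup)
    (hn₂ : l₂.Nodup) (hhead : l₁.head hne₁ = l₂.head hne₂)
    (hlast : l₁.getLast hne₁ = l₂.getLast hne₂) : l₁ = l₂ := by
  let p := Walk.ofSupport l₁ hne₁ hc₁
  let q := (Walk.ofSupport l₂ hne₂ hc₂).copy hhead.symm hlast.symm
  have hp : p.IsPath := .mk' (by rwa [Walk.support_ofSupport])
  have hq : q.IsPath := .mk' (by rwa [Walk.support_copy, Walk.support_ofSupport])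
  have hpq := congrArg (fun r : G.Path _ _ => r.1.support)
    ((hG.subsingleton_path _ _).elim ⟨p, hp⟩ ⟨q, hq⟩)
  simpa [p, q, Walk.support_ofSupport] using hpq

variable {f g : ℕ → W} {m n : ℕ}

theorem IsAcyclic.seq_unique (hG : G.IsAcyclic) (hf : ∀ k < m, G.Adj (f k) (f (k + 1)))
    (hg : ∀ k < n, G.Adj (g k) (g (k + 1))) (hfi : Set.InjOn f (Set.Iic m))
    (hgi : Set.InjOn g (Set.Iic n)) (h0 : f 0 = g 0) (hmn : f m = g n) :
    m = n ∧ ∀ k ≤ m, f k = g k := by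
  have h := hG.list_eq_of_isChain (by simp) (by simp) (List.isChain_map_range hf)
    (List.isChain_map_range hg) (List.nodup_map_range_of_injOn hfi)
    (List.nodup_map_range_of_injOn hgi) (by simpa using h0) (by simpa using hmn)
  have hmn : m = n := by simpa using congrArg List.length h
  subst hmn
  refine ⟨rfl, fun k hk => ?_⟩
  simpa [Nat.lt_succ_iff.mpr hk] using congrArg (·[k]?) h

theorem IsAcyclic.not_adj_seq (hG : G.IsAcyclic) (hf : ∀ k < n, G.Adj (f k) (f (k + 1)))
    (hfi : Set.InjOn f (Set.Iic n)) {a b : ℕ} (hab : a + 2 ≤ b) (hb : b ≤ n) :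
    ¬G.Adj (f a) (f b) := by
  intro hadj
  have hinj : Set.InjOn (fun k => f (a + k)) (Set.Iic (b - a)) := fun k hk l hl hkl => by
    have := hfi (by simp only [Set.mem_Iic] at hk ⊢; omega)
      (by simp only [Set.mem_Iic] at hl ⊢; omega) hkl
    omega
  have h := hG.list_eq_of_isChain (l₂ := [f a, f b]) (by simp) (by simp)
    (List.isChain_map_range (n := b - a) fun k hk => hf (a + k) (by omega))
    (by simpa using hadj) (List.nodup_map_range_of_injOn hinj) (by simpa using hadj.ne)
    (by simp) (by simp [show a + (b - a) = b by omega])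
  have := congrArg List.length h
  simp only [List.length_map, List.length_range, List.length_cons, List.length_nil] at this
  omega

theorem IsAcyclic.eq_of_adj_of_adj_seq (hG : G.IsAcyclic) (hf : ∀ k < n, G.Adj (f k) (f (k + 1)))
    (hfi : Set.InjOn f (Set.Iic n)) {w : W} (hw : ∀ k ≤ n, w ≠ f k) {a b : ℕ}
    (ha : G.Adj w (f a)) (hb : G.Adj w (f b)) (hab : a ≤ b) (hbn : b ≤ n) : a = b := by
  have hinj : Set.InjOn (fun k => f (a + k)) (Set.Iic (b - a)) := fun k hk l hl hkl => by
    have := hfi (by simp only [Set.mem_Iic] at hk ⊢; omega)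
      (by simp only [Set.mem_Iic] at hl ⊢; omega) hkl
    omega
  have hw' : w ∉ (List.range (b - a + 1)).map fun k => f (a + k) := by
    simpa [Nat.lt_succ_iff] using fun k hk => (hw (a + k) (by omega)).symm
  have h := hG.list_eq_of_isChain (l₁ := w :: (List.range (b - a + 1)).map fun k => f (a + k))
    (l₂ := [w, f b]) (by simp) (by simp)
    (List.IsChain.cons_of_ne_nil (by simp)
      (List.isChain_map_range (n := b - a) fun k hk => hf (a + k) (by omega)) (by simpa using ha))
    (by simpa using hb) (List.nodup_cons.mpr ⟨hw', List.nodup_map_range_of_injOn hinj⟩)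
    (by simpa using hw b hbn) rfl (by simp [show a + (b - a) = b by omega])
  have := congrArg List.length h
  simp only [List.length_cons, List.length_map, List.length_range, List.length_nil] at this
  omega

/-! ### Cutting an edge of a tree -/

theorem Reachable.of_forall_adj (h : ∀ u v, G.Adj u v → H.Reachable u v) {u v : W}
    (huv : G.Reachable u v) : H.Reachable u v := by
  rw [reachable_iff_reflTransGen] at huv
  induction huv with
  | refl => rfl
  | tail _ hadj ih => exact ih.trans (h _ _ hadj)

theorem Reachable.of_sym2_eq {a b u v : W} (h : G.Reachable u v) (he : s(a, b) = s(u, v)) :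
    G.Reachable a b := by
  rcases Sym2.eq_iff.mp he with ⟨rfl, rfl⟩ | ⟨rfl, rfl⟩
  exacts [h, h.symm]

theorem reachable_iff_of_le {K : Set W} {b z : W} (hGH : G ≤ H)
    (hK : ∀ u v, H.Adj u v → ¬G.Adj u v → u ∈ K) (hb : ∀ k ∈ K, ¬G.Reachable b k) :
    H.Reachable b z ↔ G.Reachable b z := by
  refine ⟨fun hbz => ?_, fun hbz => hbz.mono hGH⟩
  rw [reachable_iff_reflTransGen] at hbz
  induction hbz with
  | refl => rfl
  | @tail u v _ hadj ih =>
    by_cases huv : G.Adj u v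
    · exact ih.trans huv.reachable
    · exact absurd ih (hb u (hK u v hadj huv))

theorem Connected.reachable_deleteEdges_or (hG : G.Connected) (a b z : W) :
    (G.deleteEdges {s(a, b)}).Reachable a z ∨ (G.deleteEdges {s(a, b)}).Reachable b z := by
  induction (reachable_iff_reflTransGen a z).mp (hG.preconnected a z) with
  | refl => exact .inl .rfl
  | @tail u v _ hadj ih =>
    by_cases he : s(u, v) = s(a, b)
    · rcases Sym2.eq_iff.mp he with ⟨-, rfl⟩ | ⟨-, rfl⟩
      · exact .inr .rfl
      · exact .inl .rfl
    · have hadj' : (G.deleteEdges {s(a, b)}).Adj u v := by simpa [deleteEdges_adj, hadj] using he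
      exact ih.imp (·.trans hadj'.reachable) (·.trans hadj'.reachable)

theorem IsAcyclic.not_reachable_deleteEdges (hG : G.IsAcyclic) {a b : W} (hab : G.Adj a b) :
    ¬(G.deleteEdges {s(a, b)}).Reachable a b :=
  isBridge_iff.mp (isAcyclic_iff_forall_adj_isBridge.mp hG hab)

theorem IsTree.reachable_deleteEdges_iff {a b : W} (hG : G.IsTree) (hab : G.Adj a b) (z : W) :
    (G.deleteEdges {s(a, b)}).Reachable a z ↔ ¬(G.deleteEdges {s(a, b)}).Reachable b z :=
  ⟨fun haz hbz => hG.isAcyclic.not_reachable_deleteEdges hab (haz.trans hbz.symm),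
    (hG.connected.reachable_deleteEdges_or a b z).resolve_right⟩

theorem sideWith_eq {f g : Sym2 W} (hg : g ∈ G.edgeSet) (hgf : g ≠ f) {c : W} (hc : c ∈ g) :
    sideWith G f g = {z | (G.deleteEdges {f}).Reachable c z} := by
  have hg' : ∀ c' ∈ g, (G.deleteEdges {f}).Reachable c c' := by
    intro c' hc'
    obtain rfl | hcc' := eq_or_ne c c'
    · rfl
    obtain rfl : g = s(c, c') := (Sym2.mem_and_mem_iff hcc').mp ⟨hc, hc'⟩
    exact (deleteEdges_adj.mpr ⟨hg, by simpa using hgf⟩).reachable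
  ext z
  exact ⟨fun ⟨c', hc', hz⟩ => (hg' c' hc').trans hz, fun hz => ⟨c, hc, hz⟩⟩

theorem IsTree.sideOpp_eq {a b c : W} {g : Sym2 W} (hG : G.IsTree) (hab : G.Adj a b)
    (hg : g ∈ G.edgeSet) (hgf : g ≠ s(a, b)) (hc : c ∈ g)
    (hbc : ¬(G.deleteEdges {s(a, b)}).Reachable b c) :
    sideOpp G s(a, b) g = {z | (G.deleteEdges {s(a, b)}).Reachable b z} := by
  have hac := (hG.reachable_deleteEdges_iff hab c).mpr hbc
  ext z
  rw [sideOpp, sideWith_eq hg hgf hc]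
  exact ⟨fun hcz => by_contra fun hbz => hcz (hac.symm.trans
    ((hG.reachable_deleteEdges_iff hab z).mpr hbz)),
    fun hbz hcz => (hG.reachable_deleteEdges_iff hab z).mp (hac.trans hcz) hbz⟩

/-- Both sides are the component of `b` in the common forest `D`. -/
theorem IsTree.sideOpp_eq_sideOpp {G₁ G₂ D : SimpleGraph W} {K : Set W} {a₁ a₂ b c₁ c₂ : W}
    {g₁ g₂ : Sym2 W} (h₁ : G₁.IsTree) (h₂ : G₂.IsTree) (hab₁ : G₁.Adj a₁ b) (hab₂ : G₂.Adj a₂ b)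
    (hD₁ : D ≤ G₁.deleteEdges {s(a₁, b)}) (hD₂ : D ≤ G₂.deleteEdges {s(a₂, b)})
    (hK₁ : ∀ u v, (G₁.deleteEdges {s(a₁, b)}).Adj u v → ¬D.Adj u v → u ∈ K)
    (hK₂ : ∀ u v, (G₂.deleteEdges {s(a₂, b)}).Adj u v → ¬D.Adj u v → u ∈ K)
    (hb : ∀ k ∈ K, ¬D.Reachable b k)
    (hg₁ : g₁ ∈ G₁.edgeSet) (hgf₁ : g₁ ≠ s(a₁, b)) (hc₁ : c₁ ∈ g₁) (hcK₁ : c₁ ∈ K)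
    (hg₂ : g₂ ∈ G₂.edgeSet) (hgf₂ : g₂ ≠ s(a₂, b)) (hc₂ : c₂ ∈ g₂) (hcK₂ : c₂ ∈ K) :
    sideOpp G₁ s(a₁, b) g₁ = sideOpp G₂ s(a₂, b) g₂ := by
  rw [h₁.sideOpp_eq hab₁ hg₁ hgf₁ hc₁ (by rw [reachable_iff_of_le hD₁ hK₁ hb]; exact hb c₁ hcK₁),
    h₂.sideOpp_eq hab₂ hg₂ hgf₂ hc₂ (by rw [reachable_iff_of_le hD₂ hK₂ hb]; exact hb c₂ hcK₂)]
  ext z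
  exact (reachable_iff_of_le hD₁ hK₁ hb).trans (reachable_iff_of_le hD₂ hK₂ hb).symm

theorem IsTree.of_connected_of_card_edgeSet_le [Finite W] (hH : H.IsTree) (hG : G.Connected)
    (h : Nat.card G.edgeSet ≤ Nat.card H.edgeSet) : G.IsTree := by
  have hH' := (isTree_iff_connected_and_card.mp hH).2
  exact isTree_iff_connected_and_card.mpr ⟨hG, le_antisymm (by omega)
    hG.card_vert_le_card_edgeSet_add_one⟩

theorem eq_of_adj_of_encard_neighborSet_le_three {v a b c e : W}
    (h : (G.neighborSet v).encard ≤ 3) (ha : G.Adj v a) (hb : G.Adj v b) (hc : G.Adj v c)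
    (hab : a ≠ b) (hac : a ≠ c) (hbc : b ≠ c) (he : G.Adj v e) (hea : e ≠ a) (heb : e ≠ b) :
    e = c := by
  have hsub : ({a, b, c} : Set W) ⊆ G.neighborSet v := by
    simp [Set.insert_subset_iff, ha, hb, hc]
  have heq := (Set.toFinite {a, b, c}).eq_of_subset_of_encard_le hsub
    (h.trans_eq (Set.encard_eq_three.mpr ⟨a, b, c, hab, hac, hbc, rfl⟩).symm)
  have : e ∈ ({a, b, c} : Set W) := heq ▸ he
  simpa [hea, heb] using this

end SimpleGraph

namespace BranchData

section basic

variable {V W : Type*} {G : SimpleGraph W} {x y : Sym2 W} (d : BranchData G x y)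

theorem adj_vs : ∀ t < d.i, G.Adj (d.vs t) (d.vs (t + 1)) := fun t ht => by
  simpa [d.hpe (t + 1) (by omega) ht] using d.hpedge (t + 1) (by omega) ht

theorem adj_x0 : G.Adj d.x0 (d.vs 0) := by simpa [d.hxe] using d.hx

theorem adj_y1 : G.Adj (d.vs d.i) d.y1 := by simpa [d.hye] using d.hy

theorem adj_fv : G.Adj (d.vs 0) d.fv := by simpa [d.hp0] using d.hp0edge

theorem adj_gv : G.Adj (d.vs d.i) d.gv := by simpa [d.hpi1] using d.hpi1edge

theorem injOn_vs : Set.InjOn d.vs (Set.Iic d.i) :=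
  fun _ ha _ hb hab => d.hvsinj _ _ ha hb hab

theorem vs_ne_vs {s t : ℕ} (hs : s ≤ d.i) (ht : t ≤ d.i) (hst : s ≠ t) : d.vs s ≠ d.vs t :=
  fun h => hst (d.hvsinj s t hs ht h)

theorem p_one : d.p 1 = s(d.vs 0, d.vs 1) := d.hpe 1 le_rfl d.hi1

theorem mem_x_iff {c : W} : c ∈ x ↔ c = d.x0 ∨ c = d.vs 0 := by simp [d.hxe]

theorem mem_y_iff {c : W} : c ∈ y ↔ c = d.vs d.i ∨ c = d.y1 := by simp [d.hye]

include d in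
theorem x_ne_y : x ≠ y := by
  rintro rfl
  exact d.hnonadj d.x0 ⟨d.mem_x_iff.mpr (.inl rfl), d.mem_x_iff.mpr (.inl rfl)⟩

theorem fv_ne_x0 : d.fv ≠ d.x0 := fun h => d.hp0x (by rw [d.hp0, h, Sym2.eq_swap, ← d.hxe])

theorem fv_ne_vs_one : d.fv ≠ d.vs 1 := fun h => d.hp0p1 (by rw [d.hp0, d.p_one, h])

theorem gv_ne_y1 : d.gv ≠ d.y1 := fun h => d.hpi1y (by rw [d.hpi1, h, ← d.hye])

theorem gv_ne_vs_pred : d.gv ≠ d.vs (d.i - 1) := fun h =>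
  d.hpi1pi (by rw [d.hpi1, d.hpe d.i d.hi1 le_rfl, h, Sym2.eq_swap])

theorem exists_fE_eq {t : ℕ} (h2 : 2 ≤ t) (ht : t ≤ d.i) : ∃ z, d.fE t = s(d.vs (t - 1), z) :=
  ⟨_, (Sym2.other_spec (d.hfE t h2 ht).2.1).symm⟩

theorem adj_fE {t : ℕ} (h2 : 2 ≤ t) (ht : t ≤ d.i) {z : W} (hz : d.fE t = s(d.vs (t - 1), z)) :
    G.Adj (d.vs (t - 1)) z := by
  simpa [hz] using (d.hfE t h2 ht).1

theorem reachable_vs_of_adj {H : SimpleGraph W} (hH : ∀ t < d.i, H.Adj (d.vs t) (d.vs (t + 1)))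
    {t : ℕ} (ht : t ≤ d.i) : H.Reachable (d.vs 0) (d.vs t) := by
  induction t with
  | zero => rfl
  | succ t ih => exact (ih (by omega)).trans (hH t (by omega)).reachable

theorem reachable_deleteEdges_vs {e : Sym2 W} (he : ∀ t, 1 ≤ t → t ≤ d.i → d.p t ≠ e)
    {t : ℕ} (ht : t ≤ d.i) : (G.deleteEdges {e}).Reachable (d.vs 0) (d.vs t) :=
  d.reachable_vs_of_adj (fun t ht => SimpleGraph.deleteEdges_adj.mpr ⟨d.adj_vs t ht, by
    simpa [d.hpe (t + 1) (by omega) ht] using he (t + 1) (by omega) ht⟩) ht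

theorem reachable_deleteEdges_x {c : W} (hc : c ∈ y) :
    (G.deleteEdges {x}).Reachable (d.vs 0) c := by
  have hspine := d.reachable_deleteEdges_vs (e := x) (t := d.i) (fun t h1 ht hx => by
    rcases Sym2.eq_iff.mp ((d.hpe t h1 ht).symm.trans (hx.trans d.hxe)) with ⟨h, -⟩ | ⟨-, h⟩ <;>
      exact d.hx0 _ (by omega) h.symm) le_rfl
  rcases d.mem_y_iff.mp hc with rfl | rfl
  · exact hspine
  · exact hspine.trans (SimpleGraph.deleteEdges_adj.mpr
      ⟨d.adj_y1, by simpa [← d.hye] using d.x_ne_y.symm⟩).reachable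

theorem reachable_deleteEdges_y {c : W} (hc : c ∈ x) :
    (G.deleteEdges {y}).Reachable (d.vs d.i) c := by
  have hspine := d.reachable_deleteEdges_vs (e := y) (t := d.i) (fun t h1 ht hy => by
    rcases Sym2.eq_iff.mp ((d.hpe t h1 ht).symm.trans (hy.trans d.hye)) with ⟨-, h⟩ | ⟨h, -⟩ <;>
      exact d.hy1 _ (by omega) h.symm) le_rfl
  rcases d.mem_x_iff.mp hc with rfl | rfl
  · exact hspine.symm.trans (SimpleGraph.deleteEdges_adj.mpr
      ⟨d.adj_x0.symm, by simpa [← d.hxe, Sym2.eq_swap] using d.x_ne_y⟩).reachable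
  · exact hspine.symm

variable (φ : V → W)

theorem part_zero : d.part φ 0 = φ ⁻¹' sideOpp G (d.p 0) y := rfl

theorem part_one : d.part φ 1 = φ ⁻¹' sideOpp G x y := rfl

theorem part_of_le {t : ℕ} (h2 : 2 ≤ t) (ht : t ≤ d.i) :
    d.part φ t = φ ⁻¹' sideOpp G (d.fE t) y := by
  simp [part, show t ≠ 0 by omega, show t ≠ 1 by omega, ht]

theorem part_i_add_one : d.part φ (d.i + 1) = φ ⁻¹' sideOpp G y x := by
  simp [part, show d.i ≠ 0 by have := d.hi1; omega]

theorem part_i_add_two : d.part φ (d.i + 2) = φ ⁻¹' sideOpp G (d.p (d.i + 1)) y := by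
  simp [part, show d.i + 2 ≠ 1 by omega, show ¬d.i + 2 ≤ d.i by omega]

end basic

section acyclic

variable {W : Type*} {G : SimpleGraph W} {x y : Sym2 W} {d : BranchData G x y}
  (hG : G.IsAcyclic)
include hG

theorem fv_ne_vs {t : ℕ} (ht : t ≤ d.i) : d.fv ≠ d.vs t := by
  intro h
  obtain _ | _ | t := t
  · exact d.adj_fv.ne h.symm
  · exact d.fv_ne_vs_one h
  · exact hG.not_adj_seq d.adj_vs d.injOn_vs (a := 0) (by omega) ht (by simpa [h] using d.adj_fv)

theorem gv_ne_vs {t : ℕ} (ht : t ≤ d.i) : d.gv ≠ d.vs t := by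
  intro h
  obtain hti | hti | hti : t = d.i ∨ t = d.i - 1 ∨ t + 2 ≤ d.i := by omega
  · exact d.adj_gv.ne (by rw [h, hti])
  · exact d.gv_ne_vs_pred (by rw [h, hti])
  · exact hG.not_adj_seq d.adj_vs d.injOn_vs hti le_rfl (by simpa [h] using d.adj_gv.symm)

theorem not_adj_fv_vs {t : ℕ} (h1 : 1 ≤ t) (ht : t ≤ d.i) : ¬G.Adj d.fv (d.vs t) := fun h => by
  have := hG.eq_of_adj_of_adj_seq d.adj_vs d.injOn_vs (fun k hk => fv_ne_vs hG hk)
    d.adj_fv.symm h (Nat.zero_le _) ht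
  omega

theorem not_adj_gv_vs {t : ℕ} (ht : t < d.i) : ¬G.Adj d.gv (d.vs t) := fun h => by
  have := hG.eq_of_adj_of_adj_seq d.adj_vs d.injOn_vs (fun k hk => gv_ne_vs hG hk)
    h d.adj_gv.symm ht.le le_rfl
  omega

theorem not_adj_x0_vs {t : ℕ} (h1 : 1 ≤ t) (ht : t ≤ d.i) : ¬G.Adj d.x0 (d.vs t) := fun h => by
  have := hG.eq_of_adj_of_adj_seq d.adj_vs d.injOn_vs d.hx0 d.adj_x0 h (Nat.zero_le _) ht
  omega

theorem gv_ne_x0 : d.gv ≠ d.x0 := fun h =>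
  not_adj_x0_vs hG d.hi1 le_rfl (by simpa [h] using d.adj_gv.symm)

theorem fv_ne_y1 : d.fv ≠ d.y1 := fun h => by
  have := hG.eq_of_adj_of_adj_seq d.adj_vs d.injOn_vs d.hy1 (h ▸ d.adj_fv.symm) d.adj_y1.symm
    (Nat.zero_le _) le_rfl
  exact absurd this (by have := d.hi1; omega)

section fE

variable {t : ℕ} (h2 : 2 ≤ t) (ht : t ≤ d.i) {z : W} (hz : d.fE t = s(d.vs (t - 1), z))
include h2 ht hz

theorem ne_vs_of_fE_eq {s : ℕ} (hs : s ≤ d.i) : z ≠ d.vs s := by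
  rintro rfl
  have hadj := d.adj_fE h2 ht hz
  obtain h | h | h | h | h : s + 2 ≤ t - 1 ∨ s + 1 = t - 1 ∨ s = t - 1 ∨ s = t ∨ t + 1 ≤ s := by
    omega
  · exact hG.not_adj_seq d.adj_vs d.injOn_vs h (by omega) hadj.symm
  · refine (d.hfE t h2 ht).2.2.1 ?_
    rw [hz, d.hpe (t - 1) (by omega) (by omega), Sym2.eq_swap, ← h, Nat.add_sub_cancel]
  · exact hadj.ne (by rw [h])
  · exact (d.hfE t h2 ht).2.2.2 (by rw [hz, d.hpe t (by omega) ht, h])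
  · exact hG.not_adj_seq d.adj_vs d.injOn_vs (by omega) hs hadj

theorem ne_x0_of_fE_eq : z ≠ d.x0 := by
  rintro rfl
  exact not_adj_x0_vs hG (by omega) (by omega) (d.adj_fE h2 ht hz).symm

theorem ne_fv_of_fE_eq : z ≠ d.fv := by
  rintro rfl
  exact not_adj_fv_vs hG (by omega) (by omega) (d.adj_fE h2 ht hz).symm

end fE

theorem p_ne_x {k : ℕ} (hk : k ≤ d.i + 1) : d.p k ≠ x := by
  obtain rfl | hk0 := Nat.eq_zero_or_pos k
  · exact d.hp0x
  refine (ne_of_mem_of_not_mem' (d.mem_x_iff.mpr (.inl rfl)) ?_).symm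
  obtain hki | rfl := lt_or_eq_of_le hk
  · rw [d.hpe k hk0 (by omega), Sym2.mem_iff, not_or]
    exact ⟨d.hx0 _ (by omega), d.hx0 _ (by omega)⟩
  · rw [d.hpi1, Sym2.mem_iff, not_or]
    exact ⟨d.hx0 _ le_rfl, (gv_ne_x0 hG).symm⟩

theorem p_ne_y {k : ℕ} (hk : k ≤ d.i + 1) : d.p k ≠ y := by
  obtain hki | rfl := lt_or_eq_of_le hk
  swap
  · exact d.hpi1y
  refine (ne_of_mem_of_not_mem' (d.mem_y_iff.mpr (.inr rfl)) ?_).symm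
  obtain rfl | hk0 := Nat.eq_zero_or_pos k
  · rw [d.hp0, Sym2.mem_iff, not_or]
    exact ⟨d.hy1 _ (Nat.zero_le _), (fv_ne_y1 hG).symm⟩
  · rw [d.hpe k hk0 (by omega), Sym2.mem_iff, not_or]
    exact ⟨d.hy1 _ (by omega), d.hy1 _ (by omega)⟩

theorem p_ne_fE {k t : ℕ} (h2 : 2 ≤ t) (ht : t ≤ d.i) (hk : k ≤ d.i + 1) : d.p k ≠ d.fE t := by
  obtain rfl | rfl | hkt := (by omega : k = t - 1 ∨ k = t ∨ (k ≠ t - 1 ∧ k ≠ t))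
  · exact (d.hfE _ h2 ht).2.2.1.symm
  · exact (d.hfE _ h2 ht).2.2.2.symm
  refine (ne_of_mem_of_not_mem' (d.hfE t h2 ht).2.1 ?_).symm
  obtain rfl | hk0 := Nat.eq_zero_or_pos k
  · rw [d.hp0, Sym2.mem_iff, not_or]
    exact ⟨d.vs_ne_vs (by omega) (Nat.zero_le _) (by omega), (fv_ne_vs hG (by omega)).symm⟩
  obtain hki | rfl := lt_or_eq_of_le hk
  · rw [d.hpe k hk0 (by omega), Sym2.mem_iff, not_or]
    exact ⟨d.vs_ne_vs (by omega) (by omega) (by omega),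
      d.vs_ne_vs (by omega) (by omega) (by omega)⟩
  · rw [d.hpi1, Sym2.mem_iff, not_or]
    exact ⟨d.vs_ne_vs (by omega) le_rfl (by omega), (gv_ne_vs hG (by omega)).symm⟩

theorem p_ne_p_zero {t : ℕ} (h1 : 1 ≤ t) (ht : t ≤ d.i) : d.p t ≠ d.p 0 := by
  refine (ne_of_mem_of_not_mem' (by simp [d.hp0] : d.fv ∈ d.p 0) ?_).symm
  rw [d.hpe t h1 ht, Sym2.mem_iff, not_or]
  exact ⟨fv_ne_vs hG (by omega), fv_ne_vs hG ht⟩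

theorem p_ne_p_i_add_one {t : ℕ} (ht : t ≤ d.i) : d.p t ≠ d.p (d.i + 1) := by
  obtain rfl | h1 := Nat.eq_zero_or_pos t
  · refine ne_of_mem_of_not_mem' (by simp [d.hp0] : d.vs 0 ∈ d.p 0) ?_
    rw [d.hpi1, Sym2.mem_iff, not_or]
    exact ⟨d.vs_ne_vs (Nat.zero_le _) le_rfl (by have := d.hi1; omega),
      (gv_ne_vs hG (Nat.zero_le _)).symm⟩
  · refine (ne_of_mem_of_not_mem' (by simp [d.hpi1] : d.gv ∈ d.p (d.i + 1)) ?_).symm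
    rw [d.hpe t h1 ht, Sym2.mem_iff, not_or]
    exact ⟨gv_ne_vs hG (by omega), gv_ne_vs hG ht⟩

end acyclic

/-! ### Uniqueness of branch data in trees of maximal degree three -/

section unique

variable {W : Type*} {G : SimpleGraph W} {x y : Sym2 W} {d : BranchData G x y}

theorem p_zero_eq_of_adj (hdeg : (G.neighborSet (d.vs 0)).encard ≤ 3) {z : W}
    (hadj : G.Adj (d.vs 0) z) (hx0 : z ≠ d.x0) (hvs : z ≠ d.vs 1) : d.p 0 = s(d.vs 0, z) := by
  rw [d.hp0, SimpleGraph.eq_of_adj_of_encard_neighborSet_le_three hdeg d.adj_x0.symm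
    (d.adj_vs 0 d.hi1) d.adj_fv (d.hx0 1 d.hi1) d.fv_ne_x0.symm d.fv_ne_vs_one.symm hadj hx0 hvs]

theorem p_i_add_one_eq_of_adj (hdeg : (G.neighborSet (d.vs d.i)).encard ≤ 3) {z : W}
    (hadj : G.Adj (d.vs d.i) z) (hy1 : z ≠ d.y1) (hvs : z ≠ d.vs (d.i - 1)) :
    d.p (d.i + 1) = s(d.vs d.i, z) := by
  have hpred : G.Adj (d.vs d.i) (d.vs (d.i - 1)) := by
    simpa [Nat.sub_add_cancel d.hi1] using (d.adj_vs (d.i - 1) (by have := d.hi1; omega)).symm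
  rw [d.hpi1, SimpleGraph.eq_of_adj_of_encard_neighborSet_le_three hdeg d.adj_y1 hpred d.adj_gv
    (d.hy1 _ (by omega)) d.gv_ne_y1.symm d.gv_ne_vs_pred.symm hadj hy1 hvs]

variable (hG : G.IsAcyclic)
include hG

theorem fE_eq_of_adj {t : ℕ} (h2 : 2 ≤ t) (ht : t ≤ d.i)
    (hdeg : (G.neighborSet (d.vs (t - 1))).encard ≤ 3) {z : W} (hadj : G.Adj (d.vs (t - 1)) z)
    (hprev : z ≠ d.vs (t - 2)) (hnext : z ≠ d.vs t) : d.fE t = s(d.vs (t - 1), z) := by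
  obtain ⟨z', hz'⟩ := d.exists_fE_eq h2 ht
  have hprev' : G.Adj (d.vs (t - 1)) (d.vs (t - 2)) := by
    simpa [show t - 2 + 1 = t - 1 by omega] using (d.adj_vs (t - 2) (by omega)).symm
  have hnext' : G.Adj (d.vs (t - 1)) (d.vs t) := by
    simpa [show t - 1 + 1 = t by omega] using d.adj_vs (t - 1) (by omega)
  rw [hz', SimpleGraph.eq_of_adj_of_encard_neighborSet_le_three hdeg hprev' hnext'
    (d.adj_fE h2 ht hz') (d.vs_ne_vs (by omega) ht (by omega))
    (ne_vs_of_fE_eq hG h2 ht hz' (by omega)).symm (ne_vs_of_fE_eq hG h2 ht hz' ht).symm hadj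
    hprev hnext]

variable (d₁ d₂ : BranchData G x y)

/-- `x` is a bridge, and `vs 0` is its endpoint on the side of `y`. -/
theorem vs_zero_eq : d₁.vs 0 = d₂.vs 0 := by
  by_contra hne
  have hx0 : d₂.vs 0 = d₁.x0 :=
    (d₁.mem_x_iff.mp (d₂.mem_x_iff.mpr (.inr rfl))).resolve_right (Ne.symm hne)
  apply hG.not_reachable_deleteEdges d₁.adj_x0
  rw [← d₁.hxe, ← hx0]
  have hy1 : d₁.y1 ∈ y := d₁.mem_y_iff.mpr (.inr rfl)
  exact (d₂.reachable_deleteEdges_x hy1).trans (d₁.reachable_deleteEdges_x hy1).symm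

theorem vs_i_eq : d₁.vs d₁.i = d₂.vs d₂.i := by
  by_contra hne
  have hy1 : d₂.vs d₂.i = d₁.y1 :=
    (d₁.mem_y_iff.mp (d₂.mem_y_iff.mpr (.inl rfl))).resolve_left (Ne.symm hne)
  apply hG.not_reachable_deleteEdges d₁.adj_y1
  rw [← d₁.hye, ← hy1]
  have hx0 : d₁.x0 ∈ x := d₁.mem_x_iff.mpr (.inl rfl)
  exact (d₁.reachable_deleteEdges_y hx0).trans (d₂.reachable_deleteEdges_y hx0).symm

theorem i_eq_and_vs_eq : d₁.i = d₂.i ∧ ∀ t ≤ d₁.i, d₁.vs t = d₂.vs t :=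
  hG.seq_unique d₁.adj_vs d₂.adj_vs d₁.injOn_vs d₂.injOn_vs (vs_zero_eq hG d₁ d₂)
    (vs_i_eq hG d₁ d₂)

theorem i_eq_and_part_eq (hdeg : ∀ t ≤ d.i, (G.neighborSet (d.vs t)).encard ≤ 3)
    {V : Type*} (φ : V → W) : d.i = d₂.i ∧ d.part φ = d₂.part φ := by
  obtain ⟨hi, hvs⟩ := i_eq_and_vs_eq hG d d₂
  have hx0 : d.x0 = d₂.x0 :=
    Sym2.congr_left.mp (d.hxe.symm.trans (d₂.hxe.trans (by rw [hvs 0 (Nat.zero_le _)])))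
  have hy1 : d.y1 = d₂.y1 :=
    Sym2.congr_right.mp (d.hye.symm.trans (d₂.hye.trans (by rw [hvs _ le_rfl, hi])))
  have hp0 : d.p 0 = d₂.p 0 := by
    rw [d₂.hp0, ← hvs 0 (Nat.zero_le _)]
    refine p_zero_eq_of_adj (hdeg 0 (Nat.zero_le _)) ?_ ?_ ?_
    · simpa [hvs] using d₂.adj_fv
    · simpa [hx0] using d₂.fv_ne_x0
    · simpa [hvs 1 d.hi1] using d₂.fv_ne_vs_one
  have hpi1 : d.p (d.i + 1) = d₂.p (d.i + 1) := by
    rw [hi, d₂.hpi1, ← hi, ← hvs _ le_rfl]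
    refine p_i_add_one_eq_of_adj (hdeg _ le_rfl) ?_ ?_ ?_
    · rw [hvs _ le_rfl, hi]
      exact d₂.adj_gv
    · simpa [hy1] using d₂.gv_ne_y1
    · rw [hvs _ (Nat.sub_le _ _), hi]
      exact d₂.gv_ne_vs_pred
  have hfE : ∀ t, 2 ≤ t → t ≤ d.i → d.fE t = d₂.fE t := by
    intro t h2 ht
    obtain ⟨z, hz⟩ := d₂.exists_fE_eq h2 (hi ▸ ht)
    rw [hz, ← hvs _ (by omega)]
    refine fE_eq_of_adj hG h2 ht (hdeg _ (by omega)) ?_ ?_ ?_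
    · rw [hvs (t - 1) (by omega)]
      exact d₂.adj_fE h2 (hi ▸ ht) hz
    · rw [hvs (t - 2) (by omega)]
      exact ne_vs_of_fE_eq hG h2 (hi ▸ ht) hz (by omega)
    · rw [hvs t ht]
      exact ne_vs_of_fE_eq hG h2 (hi ▸ ht) hz (hi ▸ ht)
  refine ⟨hi, funext fun t => ?_⟩
  simp only [part, ← hi]
  split_ifs with h0 h1 ht
  · rw [hp0]
  · rfl
  · rw [hfE t (by omega) ht]
  · rfl
  · rw [hpi1]

end unique

section shifted

variable {W : Type*} {C : SimpleGraph W} {x y : Sym2 W} (d : BranchData C x y)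

/-- The forest shared by `C` and the shifted tree. -/
def common : SimpleGraph W := C.deleteEdges {d.p 1, d.p 0, d.p (d.i + 1)}

theorem common_le : d.common ≤ C := SimpleGraph.deleteEdges_le _

theorem common_adj {a b : W} : d.common.Adj a b ↔
    C.Adj a b ∧ s(a, b) ≠ d.p 1 ∧ s(a, b) ≠ d.p 0 ∧ s(a, b) ≠ d.p (d.i + 1) := by
  simp [common, SimpleGraph.deleteEdges_adj]

theorem common_adj_or_eq_of_adj {a b : W} (h : C.Adj a b) : d.common.Adj a b ∨
    s(a, b) = s(d.vs 0, d.vs 1) ∨ s(a, b) = s(d.vs 0, d.fv) ∨ s(a, b) = s(d.vs d.i, d.gv) := by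
  rw [common_adj, ← d.hp0, ← d.hpi1, ← d.p_one]
  tauto

theorem shifted_adj {a b : W} : d.shifted.Adj a b ↔ d.common.Adj a b ∨
    (s(a, b) = s(d.vs 0, d.vs d.i) ∨ s(a, b) = s(d.vs 1, d.fv) ∨ s(a, b) = s(d.vs 0, d.gv)) ∧
      a ≠ b := by
  simp only [shifted, SimpleGraph.fromEdgeSet_adj, common_adj, Set.mem_union, Set.mem_sdiff,
    SimpleGraph.mem_edgeSet, Set.mem_insert_iff, Set.mem_singleton_iff]
  exact ⟨fun ⟨h, hab⟩ => h.imp (fun h => ⟨h.1, by tauto⟩) (⟨·, hab⟩),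
    fun h => h.elim (fun h => ⟨.inl ⟨h.1, by tauto⟩, h.1.ne⟩) fun h => ⟨.inr h.1, h.2⟩⟩

theorem common_le_shifted : d.common ≤ d.shifted := fun _ _ h => d.shifted_adj.mpr (.inl h)

theorem common_edgeSet_subset_shifted : d.common.edgeSet ⊆ d.shifted.edgeSet :=
  SimpleGraph.edgeSet_mono d.common_le_shifted

theorem shifted_adj_vs_zero_vs_i : d.shifted.Adj (d.vs 0) (d.vs d.i) :=
  d.shifted_adj.mpr (.inr ⟨.inl rfl, d.vs_ne_vs (Nat.zero_le _) le_rfl (by have := d.hi1; omega)⟩)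

theorem shifted_adj_vs_one_fv : d.shifted.Adj (d.vs 1) d.fv :=
  d.shifted_adj.mpr (.inr ⟨.inr (.inl rfl), d.fv_ne_vs_one.symm⟩)

theorem shifted_adj_vs_zero_gv (hC : C.IsAcyclic) : d.shifted.Adj (d.vs 0) d.gv :=
  d.shifted_adj.mpr (.inr ⟨.inr (.inr rfl), (gv_ne_vs hC (Nat.zero_le _)).symm⟩)

variable {d} (hC : C.IsAcyclic)
include hC

theorem common_adj_vs {k : ℕ} (h2 : 2 ≤ k) (hk : k ≤ d.i) :
    d.common.Adj (d.vs (k - 1)) (d.vs k) := by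
  have hadj := d.adj_vs (k - 1) (by omega)
  rw [Nat.sub_add_cancel (by omega : 1 ≤ k)] at hadj
  refine d.common_adj.mpr ⟨hadj, ?_, ?_, ?_⟩
  · refine ne_of_mem_of_not_mem' (Sym2.mem_mk_right _ _) ?_
    simp [d.p_one, Sym2.mem_iff, d.vs_ne_vs hk (Nat.zero_le _) (by omega),
      d.vs_ne_vs hk d.hi1 (by omega)]
  · refine ne_of_mem_of_not_mem' (Sym2.mem_mk_right _ _) ?_
    simp [d.hp0, Sym2.mem_iff, d.vs_ne_vs hk (Nat.zero_le _) (by omega), (fv_ne_vs hC hk).symm]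
  · refine ne_of_mem_of_not_mem' (Sym2.mem_mk_left _ _) ?_
    simp [d.hpi1, Sym2.mem_iff, d.vs_ne_vs (s := k - 1) (by omega) le_rfl (by omega),
      (gv_ne_vs hC (d := d) (t := k - 1) (by omega)).symm]

theorem fE_mem_common {t : ℕ} (h2 : 2 ≤ t) (ht : t ≤ d.i) : d.fE t ∈ d.common.edgeSet := by
  simp only [common, SimpleGraph.edgeSet_deleteEdges, Set.mem_sdiff, Set.mem_insert_iff,
    Set.mem_singleton_iff, not_or]
  exact ⟨(d.hfE t h2 ht).1, (p_ne_fE hC h2 ht (by omega)).symm,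
    (p_ne_fE hC h2 ht (Nat.zero_le _)).symm, (p_ne_fE hC h2 ht le_rfl).symm⟩

theorem common_adj_x0 : d.common.Adj d.x0 (d.vs 0) := by
  rw [d.common_adj, ← d.hxe]
  exact ⟨d.adj_x0, (p_ne_x hC (by omega)).symm, (p_ne_x hC (by omega)).symm,
    (p_ne_x hC le_rfl).symm⟩

theorem common_adj_y1 : d.common.Adj (d.vs d.i) d.y1 := by
  rw [d.common_adj, ← d.hye]
  exact ⟨d.adj_y1, (p_ne_y hC (by omega)).symm, (p_ne_y hC (by omega)).symm,
    (p_ne_y hC le_rfl).symm⟩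

end shifted

section shiftData

variable {W : Type*} {C : SimpleGraph W} {x y : Sym2 W} (d : BranchData C x y)

def shiftedVs : ℕ → W := fun t => if t < d.i then d.vs (t + 1) else d.vs 0

def shiftedP (t : ℕ) : Sym2 W :=
  if t = 0 then s(d.vs 1, d.fv) else if t ≤ d.i then s(d.shiftedVs (t - 1), d.shiftedVs t)
  else s(d.vs 0, d.gv)

def shiftedFE (t : ℕ) : Sym2 W := if t < d.i then d.fE (t + 1) else y

/-- The endpoint of `fE 2` other than `vs 1`. -/
noncomputable def fE2End (hi : 2 ≤ d.i) : W := Sym2.Mem.other (d.hfE 2 le_rfl hi).2.1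

theorem shiftedVs_of_lt {t : ℕ} (ht : t < d.i) : d.shiftedVs t = d.vs (t + 1) := if_pos ht

theorem shiftedVs_i : d.shiftedVs d.i = d.vs 0 := if_neg (lt_irrefl _)

theorem exists_shiftedVs_eq {t : ℕ} (ht : t ≤ d.i) : ∃ s ≤ d.i, d.shiftedVs t = d.vs s := by
  obtain ht | rfl := lt_or_eq_of_le ht
  · exact ⟨t + 1, ht, d.shiftedVs_of_lt ht⟩
  · exact ⟨0, Nat.zero_le _, d.shiftedVs_i⟩

theorem injOn_shiftedVs : Set.InjOn d.shiftedVs (Set.Iic d.i) := by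
  intro a ha b hb hab
  simp only [Set.mem_Iic] at ha hb
  simp only [shiftedVs] at hab
  split_ifs at hab <;> first | omega | have := d.hvsinj _ _ (by omega) (by omega) hab; omega

theorem shiftedP_of_le {t : ℕ} (h1 : 1 ≤ t) (ht : t ≤ d.i) :
    d.shiftedP t = s(d.shiftedVs (t - 1), d.shiftedVs t) := by
  simp [shiftedP, show t ≠ 0 by omega, ht]

theorem shiftedP_of_lt {t : ℕ} (h1 : 1 ≤ t) (ht : t < d.i) : d.shiftedP t = d.p (t + 1) := by
  rw [d.shiftedP_of_le h1 ht.le, d.shiftedVs_of_lt (by omega), d.shiftedVs_of_lt ht,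
    d.hpe (t + 1) (by omega) ht, Nat.sub_add_cancel h1, Nat.add_sub_cancel]

theorem shiftedP_i : d.shiftedP d.i = s(d.vs d.i, d.vs 0) := by
  rw [d.shiftedP_of_le d.hi1 le_rfl, d.shiftedVs_of_lt (by have := d.hi1; omega),
    Nat.sub_add_cancel d.hi1, d.shiftedVs_i]

theorem shiftedP_i_add_one : d.shiftedP (d.i + 1) = s(d.vs 0, d.gv) := by
  simp [shiftedP]

theorem fE_two_eq (hi : 2 ≤ d.i) : d.fE 2 = s(d.vs 1, d.fE2End hi) :=
  (Sym2.other_spec (d.hfE 2 le_rfl hi).2.1).symm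

variable {d} (hC : C.IsAcyclic)
include hC

theorem shifted_adj_shiftedVs {t : ℕ} (ht : t < d.i) :
    d.shifted.Adj (d.shiftedVs t) (d.shiftedVs (t + 1)) := by
  rw [d.shiftedVs_of_lt ht]
  obtain ht' | ht' := lt_or_eq_of_le (Nat.succ_le_of_lt ht)
  · rw [d.shiftedVs_of_lt ht']
    exact d.common_le_shifted (common_adj_vs hC (k := t + 2) (by omega) (by omega))
  · rw [← Nat.succ_eq_add_one, ht', d.shiftedVs_i]
    exact d.shifted_adj_vs_zero_vs_i.symm

variable (hi : 2 ≤ d.i)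
include hi

theorem shiftedFE_spec {t : ℕ} (h2 : 2 ≤ t) (ht : t ≤ d.i) :
    d.shiftedFE t ∈ d.shifted.edgeSet ∧ d.shiftedVs (t - 1) ∈ d.shiftedFE t ∧
      d.shiftedFE t ≠ d.shiftedP (t - 1) ∧ d.shiftedFE t ≠ d.shiftedP t := by
  rw [d.shiftedVs_of_lt (by omega), d.shiftedP_of_lt (by omega) (by omega),
    Nat.sub_add_cancel (by omega : 1 ≤ t)]
  obtain ht | rfl := lt_or_eq_of_le ht
  · have hfE := d.hfE (t + 1) (by omega) (by omega)
    rw [Nat.add_sub_cancel] at hfE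
    rw [shiftedFE, if_pos ht, d.shiftedP_of_lt (by omega) ht]
    exact ⟨d.common_edgeSet_subset_shifted (fE_mem_common hC (by omega) (by omega)), hfE.2⟩
  · have hy1 : d.y1 ∈ y := d.mem_y_iff.mpr (.inr rfl)
    rw [shiftedFE, if_neg (lt_irrefl _), d.shiftedP_i]
    refine ⟨(congrArg (· ∈ d.shifted.edgeSet) d.hye).mpr
      (d.common_le_shifted (common_adj_y1 hC)), d.mem_y_iff.mpr (.inl rfl),
      ne_of_mem_of_not_mem' hy1 ?_, ne_of_mem_of_not_mem' hy1 ?_⟩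
    · rw [d.hpe _ d.hi1 le_rfl, Sym2.mem_iff, not_or]
      exact ⟨d.hy1 _ (by omega), d.hy1 _ le_rfl⟩
    · rw [Sym2.mem_iff, not_or]
      exact ⟨d.hy1 _ le_rfl, d.hy1 _ (Nat.zero_le _)⟩

theorem fE2End_ne_vs {t : ℕ} (ht : t ≤ d.i) : d.fE2End hi ≠ d.vs t :=
  ne_vs_of_fE_eq hC le_rfl hi (d.fE_two_eq hi) ht

@[simps]
noncomputable def shiftData : BranchData d.shifted (d.fE 2) x where
  i := d.i
  hi1 := d.hi1
  vs := d.shiftedVs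
  x0 := d.fE2End hi
  y1 := d.x0
  fv := d.fv
  gv := d.gv
  p := d.shiftedP
  fE := d.shiftedFE
  hx := d.common_edgeSet_subset_shifted (fE_mem_common hC le_rfl hi)
  hy := (congrArg (· ∈ d.shifted.edgeSet) d.hxe).mpr (d.common_le_shifted (common_adj_x0 hC))
  hnonadj z := by
    rw [d.fE_two_eq hi, Sym2.mem_iff, d.mem_x_iff]
    rintro ⟨h₁ | h₁, h₂ | h₂⟩ <;> rw [h₁] at h₂
    · exact d.hx0 1 d.hi1 h₂.symm
    · exact d.vs_ne_vs d.hi1 (Nat.zero_le _) (by omega) h₂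
    · exact ne_x0_of_fE_eq hC le_rfl hi (d.fE_two_eq hi) h₂
    · exact fE2End_ne_vs hC hi (Nat.zero_le _) h₂
  hxe := by rw [d.fE_two_eq hi, d.shiftedVs_of_lt (by omega), Sym2.eq_swap]
  hye := by rw [d.shiftedVs_i, Sym2.eq_swap, ← d.hxe]
  hpe t h1 ht := d.shiftedP_of_le h1 ht
  hpedge t h1 ht := by
    simpa [d.shiftedP_of_le h1 ht, Nat.sub_add_cancel h1] using
      shifted_adj_shiftedVs hC (t := t - 1) (by omega)
  hvsinj _ _ ha hb hab := d.injOn_shiftedVs ha hb hab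
  hx0 t ht := by
    obtain ⟨s, hs, h⟩ := d.exists_shiftedVs_eq ht
    exact h ▸ fE2End_ne_vs hC hi hs
  hy1 t ht := by
    obtain ⟨s, hs, h⟩ := d.exists_shiftedVs_eq ht
    exact h ▸ d.hx0 s hs
  hp0 := by simp [shiftedP, d.shiftedVs_of_lt (show 0 < d.i by omega)]
  hp0edge := by simpa [shiftedP] using d.shifted_adj_vs_one_fv
  hp0x := by
    refine ne_of_mem_of_not_mem' (by simp [shiftedP] : d.fv ∈ d.shiftedP 0) ?_
    rw [d.fE_two_eq hi, Sym2.mem_iff, not_or]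
    exact ⟨d.fv_ne_vs_one, (ne_fv_of_fE_eq hC le_rfl hi (d.fE_two_eq hi)).symm⟩
  hp0p1 := by
    refine ne_of_mem_of_not_mem' (by simp [shiftedP] : d.fv ∈ d.shiftedP 0) ?_
    rw [d.shiftedP_of_le le_rfl d.hi1, d.shiftedVs_of_lt (by omega),
      d.shiftedVs_of_lt (by omega), Sym2.mem_iff, not_or]
    exact ⟨d.fv_ne_vs_one, fv_ne_vs hC hi⟩
  hpi1 := by rw [d.shiftedP_i_add_one, d.shiftedVs_i]
  hpi1edge := by simpa [d.shiftedP_i_add_one] using d.shifted_adj_vs_zero_gv hC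
  hpi1y := by
    refine ne_of_mem_of_not_mem' (by simp [d.shiftedP_i_add_one] : d.gv ∈ d.shiftedP (d.i + 1)) ?_
    rw [d.mem_x_iff, not_or]
    exact ⟨gv_ne_x0 hC, gv_ne_vs hC (Nat.zero_le _)⟩
  hpi1pi := by
    refine ne_of_mem_of_not_mem' (by simp [d.shiftedP_i_add_one] : d.gv ∈ d.shiftedP (d.i + 1)) ?_
    rw [d.shiftedP_i, Sym2.mem_iff, not_or]
    exact ⟨gv_ne_vs hC le_rfl, gv_ne_vs hC (Nat.zero_le _)⟩
  hfE t h2 ht := shiftedFE_spec hC hi h2 ht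

end shiftData

/-! ### The shifted tree -/

section shiftedTree

variable {W : Type*} {C : SimpleGraph W} {x y : Sym2 W} {d : BranchData C x y}
  (hC : C.IsAcyclic)
include hC

theorem card_edgeSet_shifted_le [Finite W] :
    Nat.card d.shifted.edgeSet ≤ Nat.card C.edgeSet := by
  have hR : ({d.p 1, d.p 0, d.p (d.i + 1)} : Set (Sym2 W)).ncard = 3 :=
    Set.ncard_eq_three.mpr ⟨_, _, _, d.hp0p1.symm, p_ne_p_i_add_one hC d.hi1,
      p_ne_p_i_add_one hC (Nat.zero_le _), rfl⟩
  have hA : ({s(d.vs 0, d.vs d.i), s(d.vs 1, d.fv), s(d.vs 0, d.gv)} : Set (Sym2 W)).ncard ≤ 3 :=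
    (Set.ncard_insert_le _ _).trans (Nat.succ_le_succ ((Set.ncard_insert_le _ _).trans
      (by rw [Set.ncard_singleton])))
  have hsub : ({d.p 1, d.p 0, d.p (d.i + 1)} : Set (Sym2 W)) ⊆ C.edgeSet := by
    simp [Set.insert_subset_iff, d.hpedge 1 le_rfl d.hi1, d.hp0edge, d.hpi1edge]
  have hE := Set.ncard_sdiff_add_ncard_of_subset hsub
  rw [Nat.card_coe_set_eq, Nat.card_coe_set_eq, shifted, SimpleGraph.edgeSet_fromEdgeSet]
  calc _ ≤ _ := Set.ncard_le_ncard Set.sdiff_subset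
    _ ≤ _ := Set.ncard_union_le _ _
    _ ≤ _ := by omega

variable (hi : 2 ≤ d.i)
include hi

theorem shifted_reachable_vs_one_vs_zero : d.shifted.Reachable (d.vs 1) (d.vs 0) := by
  have h := (d.shiftData hC hi).reachable_vs_of_adj (d.shiftData hC hi).adj_vs le_rfl
  rwa [shiftData_i, shiftData_vs, shiftData_vs, d.shiftedVs_i, d.shiftedVs_of_lt (by omega)] at h

theorem shifted_connected (hCc : C.Connected) : d.shifted.Connected where
  preconnected u v := by
    refine (hCc.preconnected u v).of_forall_adj fun a b hab => ?_
    have h01 := (shifted_reachable_vs_one_vs_zero hC hi).symm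
    rcases d.common_adj_or_eq_of_adj hab with h | h | h | h
    · exact (d.common_le_shifted h).reachable
    · exact h01.of_sym2_eq h
    · exact (h01.trans d.shifted_adj_vs_one_fv.reachable).of_sym2_eq h
    · exact (d.shifted_adj_vs_zero_vs_i.symm.reachable.trans
        (d.shifted_adj_vs_zero_gv hC).reachable).of_sym2_eq h
  nonempty := hCc.nonempty

theorem shifted_isTree [Finite W] (hCt : C.IsTree) : d.shifted.IsTree :=
  hCt.of_connected_of_card_edgeSet_le (shifted_connected hC hi hCt.connected)
    (card_edgeSet_shifted_le hC)

theorem encard_neighborSet_shifted_le {t : ℕ} (ht : t ≤ d.i) :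
    (d.shifted.neighborSet (d.shiftedVs t)).encard ≤ (C.neighborSet (d.shiftedVs t)).encard := by
  have h01 := d.vs_ne_vs (Nat.zero_le _) d.hi1 (by omega)
  have h0i := d.vs_ne_vs (Nat.zero_le _) le_rfl (by omega)
  have h1i := d.vs_ne_vs d.hi1 le_rfl (by omega)
  have hf0 := fv_ne_vs hC (d := d) (Nat.zero_le _)
  have hf1 := fv_ne_vs hC (d := d) d.hi1
  have hfi := fv_ne_vs hC (d := d) le_rfl
  have hg0 := gv_ne_vs hC (d := d) (Nat.zero_le _)
  have hg1 := gv_ne_vs hC (d := d) d.hi1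
  have hgi := gv_ne_vs hC (d := d) le_rfl
  have hadj {a b : W} : d.shifted.Adj a b ↔
      (C.Adj a b ∧ s(a, b) ≠ s(d.vs 0, d.vs 1) ∧ s(a, b) ≠ s(d.vs 0, d.fv) ∧
        s(a, b) ≠ s(d.vs d.i, d.gv)) ∨
      (s(a, b) = s(d.vs 0, d.vs d.i) ∨ s(a, b) = s(d.vs 1, d.fv) ∨
        s(a, b) = s(d.vs 0, d.gv)) ∧ a ≠ b := by
    rw [shifted_adj, common_adj, d.hp0, d.hpi1, d.p_one]
  obtain rfl | ht0 := Nat.eq_zero_or_pos t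
  · rw [d.shiftedVs_of_lt (by omega)]
    refine Set.encard_le_of_subset_sdiff_union (u := {d.vs 0}) (v := {d.fv}) ?_
      (by simpa using (d.adj_vs 0 (by omega)).symm) (by simp)
    intro b hb
    simp only [SimpleGraph.mem_neighborSet, hadj, Sym2.eq_iff] at hb
    simp only [Set.mem_union, Set.mem_sdiff, SimpleGraph.mem_neighborSet, Set.mem_singleton_iff]
    grind
  obtain hti | rfl | rfl : t + 2 ≤ d.i ∨ t = d.i - 1 ∨ t = d.i := by omega
  · rw [d.shiftedVs_of_lt (by omega)]
    have hv0 := d.vs_ne_vs (s := t + 1) (by omega) (Nat.zero_le _) (by omega)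
    have hv1 := d.vs_ne_vs (s := t + 1) (by omega) d.hi1 (by omega)
    have hvi := d.vs_ne_vs (s := t + 1) (by omega) le_rfl (by omega)
    have hvf := fv_ne_vs hC (d := d) (t := t + 1) (by omega)
    have hvg := gv_ne_vs hC (d := d) (t := t + 1) (by omega)
    refine Set.encard_le_encard fun b hb => ?_
    simp only [SimpleGraph.mem_neighborSet, hadj, Sym2.eq_iff] at hb
    simp only [SimpleGraph.mem_neighborSet]
    grind
  · rw [d.shiftedVs_of_lt (by omega), Nat.sub_add_cancel d.hi1]
    refine Set.encard_le_of_subset_sdiff_union (u := {d.gv}) (v := {d.vs 0}) ?_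
      (by simpa using d.adj_gv) (by simp)
    intro b hb
    simp only [SimpleGraph.mem_neighborSet, hadj, Sym2.eq_iff] at hb
    simp only [Set.mem_union, Set.mem_sdiff, SimpleGraph.mem_neighborSet, Set.mem_singleton_iff]
    grind
  · rw [d.shiftedVs_i]
    refine Set.encard_le_of_subset_sdiff_union (u := {d.vs 1, d.fv}) (v := {d.vs d.i, d.gv}) ?_
      (by simpa [Set.insert_subset_iff] using ⟨d.adj_vs 0 (by omega), d.adj_fv⟩)
      (by rw [Set.encard_pair d.fv_ne_vs_one.symm, Set.encard_pair hgi.symm])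
    intro b hb
    simp only [SimpleGraph.mem_neighborSet, hadj, Sym2.eq_iff] at hb
    simp only [Set.mem_union, Set.mem_sdiff, SimpleGraph.mem_neighborSet, Set.mem_insert_iff,
      Set.mem_singleton_iff]
    grind

theorem encard_neighborSet_shiftData_le (hCay : IsCayley C) :
    ∀ t ≤ (d.shiftData hC hi).i,
      (d.shifted.neighborSet ((d.shiftData hC hi).vs t)).encard ≤ 3 := fun _ ht =>
  (encard_neighborSet_shifted_le hC hi ht).trans (Set.encard_le_three_of_ncard (hCay.2 _))

end shiftedTree

/-! ### Sides in the shifted tree -/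

section sides

variable {W : Type*} {C : SimpleGraph W} {x y : Sym2 W} (d : BranchData C x y)

/-- The endpoints of the edges removed and added by the branch shift. -/
def shiftEnds : Set W := {d.vs 0, d.vs 1, d.vs d.i, d.fv, d.gv}

variable {d}

theorem mem_shiftEnds_of_adj {u v : W} (h : C.Adj u v) (hn : ¬d.common.Adj u v) :
    u ∈ d.shiftEnds := by
  rcases (d.common_adj_or_eq_of_adj h).resolve_left hn with h | h | h <;>
    rcases Sym2.eq_iff.mp h with ⟨rfl, -⟩ | ⟨rfl, -⟩ <;> simp [shiftEnds]

theorem mem_shiftEnds_of_shifted_adj {u v : W} (h : d.shifted.Adj u v)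
    (hn : ¬d.common.Adj u v) : u ∈ d.shiftEnds := by
  rcases (d.shifted_adj.mp h).resolve_left hn with ⟨h | h | h, -⟩ <;>
    rcases Sym2.eq_iff.mp h with ⟨rfl, -⟩ | ⟨rfl, -⟩ <;> simp [shiftEnds]

theorem common_le_shifted_deleteEdges {a b : W} (hab : ¬C.Adj a b) :
    d.common ≤ d.shifted.deleteEdges {s(a, b)} := fun u v h =>
  SimpleGraph.deleteEdges_adj.mpr ⟨d.common_le_shifted h, fun he => hab (by
    rw [← SimpleGraph.mem_edgeSet, ← Set.mem_singleton_iff.mp he]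
    exact d.common_le h)⟩

theorem reachable_deleteEdges_shiftEnds {e : Sym2 W} (he : ∀ k ≤ d.i + 1, d.p k ≠ e) :
    ∀ k ∈ d.shiftEnds, (C.deleteEdges {e}).Reachable (d.vs 0) k := by
  have hspine {t : ℕ} (ht : t ≤ d.i) :=
    d.reachable_deleteEdges_vs (fun t _ ht => he t (by omega)) ht
  have hadj {a b : W} (h : C.Adj a b) (hne : s(a, b) ≠ e) : (C.deleteEdges {e}).Adj a b :=
    SimpleGraph.deleteEdges_adj.mpr ⟨h, by simpa using hne⟩
  simp only [shiftEnds, Set.mem_insert_iff, Set.mem_singleton_iff, forall_eq_or_imp, forall_eq]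
  refine ⟨.rfl, hspine d.hi1, hspine le_rfl, (hadj d.adj_fv ?_).reachable,
    (hspine le_rfl).trans (hadj d.adj_gv ?_).reachable⟩
  · simpa [d.hp0] using he 0 (by omega)
  · simpa [d.hpi1] using he (d.i + 1) le_rfl

variable (hCt : C.IsTree) (hC't : d.shifted.IsTree)
include hCt hC't

theorem sideOpp_shifted_eq_of_common {j : ℕ} (hj : j ≤ d.i) {b : W}
    (hadj : d.common.Adj (d.vs j) b) {f : Sym2 W} (hfe : f = s(d.vs j, b))
    (hf : ∀ k ≤ d.i + 1, d.p k ≠ f) {g g' : Sym2 W} {c c' : W}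
    (hg : g ∈ C.edgeSet) (hgf : g ≠ f) (hc : c ∈ g) (hcK : c ∈ d.shiftEnds)
    (hg' : g' ∈ d.shifted.edgeSet) (hgf' : g' ≠ f) (hc' : c' ∈ g') (hcK' : c' ∈ d.shiftEnds) :
    sideOpp C f g = sideOpp d.shifted f g' := by
  subst hfe
  have hle {H : SimpleGraph W} (hH : d.common ≤ H) :
      d.common.deleteEdges {s(d.vs j, b)} ≤ H.deleteEdges {s(d.vs j, b)} := fun u v h => by
    rw [SimpleGraph.deleteEdges_adj] at h ⊢
    exact ⟨hH h.1, h.2⟩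
  have hK {H : SimpleGraph W} (hH : ∀ {u v}, H.Adj u v → ¬d.common.Adj u v → u ∈ d.shiftEnds)
      (u v : W) (h : (H.deleteEdges {s(d.vs j, b)}).Adj u v)
      (hn : ¬(d.common.deleteEdges {s(d.vs j, b)}).Adj u v) : u ∈ d.shiftEnds := by
    rw [SimpleGraph.deleteEdges_adj] at h hn
    exact hH h.1 fun h' => hn ⟨h', h.2⟩
  refine hCt.sideOpp_eq_sideOpp hC't (d.common_le hadj) (d.common_le_shifted hadj)
    (hle d.common_le) (hle d.common_le_shifted) (hK mem_shiftEnds_of_adj)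
    (hK mem_shiftEnds_of_shifted_adj) (fun k hk hbk => ?_) hg hgf hc hcK hg' hgf' hc' hcK'
  exact hCt.isAcyclic.not_reachable_deleteEdges (d.common_le hadj)
    (((d.reachable_deleteEdges_vs (fun t _ ht => hf t (by omega)) hj).symm.trans
      (reachable_deleteEdges_shiftEnds hf k hk)).trans (hbk.mono (hle d.common_le)).symm)

variable (hi : 2 ≤ d.i)
include hi

theorem sideOpp_shifted_x : sideOpp d.shifted x (d.fE 2) = sideOpp C x y := by
  have hmem := (d.hfE 2 le_rfl hi).2.1
  refine (sideOpp_shifted_eq_of_common hCt hC't (Nat.zero_le _)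
    (common_adj_x0 hCt.isAcyclic).symm (d.hxe.trans Sym2.eq_swap)
    (fun k hk => p_ne_x hCt.isAcyclic hk) d.hy d.x_ne_y.symm (d.mem_y_iff.mpr (.inl rfl))
    (by simp [shiftEnds]) (d.shiftData hCt.isAcyclic hi).hx (fun h => ?_) hmem
    (by simp [shiftEnds])).symm
  exact (d.shiftData hCt.isAcyclic hi).hnonadj (d.vs 1) ⟨hmem, (congrArg (d.vs 1 ∈ ·) h).mp hmem⟩

theorem sideOpp_shifted_y : sideOpp d.shifted y x = sideOpp C y x :=
  (sideOpp_shifted_eq_of_common hCt hC't le_rfl (common_adj_y1 hCt.isAcyclic) d.hye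
    (fun _ hk => p_ne_y hCt.isAcyclic hk) d.hx d.x_ne_y (d.mem_x_iff.mpr (.inr rfl))
    (by simp [shiftEnds]) (d.shiftData hCt.isAcyclic hi).hy d.x_ne_y (d.mem_x_iff.mpr (.inr rfl))
    (by simp [shiftEnds])).symm

theorem sideOpp_shifted_fE {t : ℕ} (h2 : 2 ≤ t) (ht : t ≤ d.i) :
    sideOpp d.shifted (d.fE t) x = sideOpp C (d.fE t) y := by
  obtain ⟨z, hz⟩ := d.exists_fE_eq h2 ht
  have hmem := (d.hfE t h2 ht).2.1
  refine (sideOpp_shifted_eq_of_common hCt hC't (by omega)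
    ((congrArg (· ∈ d.common.edgeSet) hz).mp (fE_mem_common hCt.isAcyclic h2 ht)) hz
    (fun _ hk => p_ne_fE hCt.isAcyclic h2 ht hk) d.hy ?_ (d.mem_y_iff.mpr (.inl rfl))
    (by simp [shiftEnds]) (d.shiftData hCt.isAcyclic hi).hy ?_ (d.mem_x_iff.mpr (.inr rfl))
    (by simp [shiftEnds])).symm
  · refine (ne_of_mem_of_not_mem' hmem ?_).symm
    rw [d.mem_y_iff, not_or]
    exact ⟨d.vs_ne_vs (by omega) le_rfl (by omega), (d.hy1 _ (by omega)).symm⟩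
  · refine (ne_of_mem_of_not_mem' hmem ?_).symm
    rw [d.mem_x_iff, not_or]
    exact ⟨(d.hx0 _ (by omega)).symm, d.vs_ne_vs (by omega) (Nat.zero_le _) (by omega)⟩

theorem sideOpp_shifted_p_zero : sideOpp d.shifted s(d.vs 1, d.fv) x = sideOpp C (d.p 0) y := by
  have hC := hCt.isAcyclic
  have hD₁ : d.common ≤ C.deleteEdges {s(d.vs 0, d.fv)} := by
    rw [← d.hp0]
    exact SimpleGraph.deleteEdges_anti (by simp)
  have hreach : ∀ k ∈ ({d.vs 0, d.vs 1, d.vs d.i, d.gv} : Set W),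
      (C.deleteEdges {s(d.vs 0, d.fv)}).Reachable (d.vs 0) k := by
    have hspine {t : ℕ} (ht : t ≤ d.i) := d.reachable_deleteEdges_vs
      (fun t h1 ht => d.hp0 ▸ p_ne_p_zero hC h1 ht) ht
    simp only [Set.mem_insert_iff, Set.mem_singleton_iff, forall_eq_or_imp, forall_eq]
    refine ⟨.rfl, hspine d.hi1, hspine le_rfl, (hspine le_rfl).trans
      (SimpleGraph.deleteEdges_adj.mpr ⟨d.adj_gv, ?_⟩).reachable⟩
    simpa [← d.hp0, ← d.hpi1] using (p_ne_p_i_add_one hC (Nat.zero_le _)).symm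
  rw [d.hp0]
  refine (hCt.sideOpp_eq_sideOpp hC't (K := {d.vs 0, d.vs 1, d.vs d.i, d.gv}) d.adj_fv
    d.shifted_adj_vs_one_fv hD₁
    (d.common_le_shifted_deleteEdges fun h => not_adj_fv_vs hC le_rfl d.hi1 h.symm)
    (fun u v h hn => ?_) (fun u v h hn => ?_) (fun k hk hr => ?_) d.hy
    (fun h => p_ne_y hC (k := 0) (by omega) (d.hp0.trans h.symm)) (d.mem_y_iff.mpr (.inl rfl))
    (by simp) (d.shiftData hC hi).hy ?_ (d.mem_x_iff.mpr (.inr rfl)) (by simp)).symm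
  · rw [SimpleGraph.deleteEdges_adj] at h
    rcases (d.common_adj_or_eq_of_adj h.1).resolve_left hn with he | he | he
    · rcases Sym2.eq_iff.mp he with ⟨rfl, -⟩ | ⟨rfl, -⟩ <;> simp
    · exact absurd he (by simpa using h.2)
    · rcases Sym2.eq_iff.mp he with ⟨rfl, -⟩ | ⟨rfl, -⟩ <;> simp
  · rw [SimpleGraph.deleteEdges_adj] at h
    rcases (d.shifted_adj.mp h.1).resolve_left hn with ⟨he | he | he, -⟩
    · rcases Sym2.eq_iff.mp he with ⟨rfl, -⟩ | ⟨rfl, -⟩ <;> simp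
    · exact absurd he (by simpa using h.2)
    · rcases Sym2.eq_iff.mp he with ⟨rfl, -⟩ | ⟨rfl, -⟩ <;> simp
  · exact hC.not_reachable_deleteEdges d.adj_fv ((hreach k hk).trans (hr.mono hD₁).symm)
  · refine ne_of_mem_of_not_mem' (d.mem_x_iff.mpr (.inl rfl)) ?_
    rw [Sym2.mem_iff, not_or]
    exact ⟨d.hx0 1 d.hi1, d.fv_ne_x0.symm⟩

theorem sideOpp_shifted_p_i_add_one :
    sideOpp d.shifted s(d.vs 0, d.gv) x = sideOpp C (d.p (d.i + 1)) y := by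
  have hC := hCt.isAcyclic
  have hD₁ : d.common ≤ C.deleteEdges {s(d.vs d.i, d.gv)} := by
    rw [← d.hpi1]
    exact SimpleGraph.deleteEdges_anti (by simp)
  have hreach : ∀ k ∈ ({d.vs 0, d.vs 1, d.vs d.i, d.fv} : Set W),
      (C.deleteEdges {s(d.vs d.i, d.gv)}).Reachable (d.vs d.i) k := by
    have hspine {t : ℕ} (ht : t ≤ d.i) := d.reachable_deleteEdges_vs
      (fun t _ ht => d.hpi1 ▸ p_ne_p_i_add_one hC ht) ht
    simp only [Set.mem_insert_iff, Set.mem_singleton_iff, forall_eq_or_imp, forall_eq]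
    refine ⟨(hspine le_rfl).symm, (hspine le_rfl).symm.trans (hspine d.hi1), .rfl,
      (hspine le_rfl).symm.trans (SimpleGraph.deleteEdges_adj.mpr ⟨d.adj_fv, ?_⟩).reachable⟩
    simpa [← d.hp0, ← d.hpi1] using p_ne_p_i_add_one hC (Nat.zero_le _)
  rw [d.hpi1]
  refine (hCt.sideOpp_eq_sideOpp hC't (K := {d.vs 0, d.vs 1, d.vs d.i, d.fv}) d.adj_gv
    (d.shifted_adj_vs_zero_gv hC) hD₁
    (d.common_le_shifted_deleteEdges fun h => not_adj_gv_vs hC (d := d) (t := 0) (by omega) h.symm)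
    (fun u v h hn => ?_) (fun u v h hn => ?_) (fun k hk hr => ?_) d.hy
    (fun h => d.hpi1y (d.hpi1.trans h.symm)) (d.mem_y_iff.mpr (.inl rfl)) (by simp)
    (d.shiftData hC hi).hy ?_ (d.mem_x_iff.mpr (.inr rfl)) (by simp)).symm
  · rw [SimpleGraph.deleteEdges_adj] at h
    rcases (d.common_adj_or_eq_of_adj h.1).resolve_left hn with he | he | he
    · rcases Sym2.eq_iff.mp he with ⟨rfl, -⟩ | ⟨rfl, -⟩ <;> simp
    · rcases Sym2.eq_iff.mp he with ⟨rfl, -⟩ | ⟨rfl, -⟩ <;> simp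
    · exact absurd he (by simpa using h.2)
  · rw [SimpleGraph.deleteEdges_adj] at h
    rcases (d.shifted_adj.mp h.1).resolve_left hn with ⟨he | he | he, -⟩
    · rcases Sym2.eq_iff.mp he with ⟨rfl, -⟩ | ⟨rfl, -⟩ <;> simp
    · rcases Sym2.eq_iff.mp he with ⟨rfl, -⟩ | ⟨rfl, -⟩ <;> simp
    · exact absurd he (by simpa using h.2)
  · exact hC.not_reachable_deleteEdges d.adj_gv ((hreach k hk).trans (hr.mono hD₁).symm)
  · refine ne_of_mem_of_not_mem' (d.mem_x_iff.mpr (.inl rfl)) ?_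
    rw [Sym2.mem_iff, not_or]
    exact ⟨d.hx0 0 (Nat.zero_le _), (gv_ne_x0 hC).symm⟩

end sides

section parts

variable {V W : Type*} {C : SimpleGraph W} {x y : Sym2 W} {d : BranchData C x y}
  (hCt : C.IsTree) (hi : 2 ≤ d.i) (hC't : d.shifted.IsTree) (φ : V → W)
include hCt hC't

theorem part_shiftData_zero : (d.shiftData hCt.isAcyclic hi).part φ 0 = d.part φ 0 := by
  rw [part_zero, part_zero, shiftData_p, shiftedP, if_pos rfl,
    sideOpp_shifted_p_zero hCt hC't hi]

theorem part_shiftData_i_add_two :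
    (d.shiftData hCt.isAcyclic hi).part φ (d.i + 2) = d.part φ (d.i + 2) :=
  ((d.shiftData hCt.isAcyclic hi).part_i_add_two φ).trans (by
    rw [part_i_add_two, shiftData_p, shiftData_i, d.shiftedP_i_add_one,
      sideOpp_shifted_p_i_add_one hCt hC't hi])

theorem part_shiftData_i_add_one :
    (d.shiftData hCt.isAcyclic hi).part φ (d.i + 1) = d.part φ 1 :=
  ((d.shiftData hCt.isAcyclic hi).part_i_add_one φ).trans (by
    rw [part_one, sideOpp_shifted_x hCt hC't hi])

theorem part_shiftData_of_le {t : ℕ} (h1 : 1 ≤ t) (ht : t ≤ d.i) :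
    (d.shiftData hCt.isAcyclic hi).part φ t = d.part φ (t + 1) := by
  obtain rfl | h2 := eq_or_lt_of_le h1
  · rw [part_one, d.part_of_le φ le_rfl hi, sideOpp_shifted_fE hCt hC't hi le_rfl hi]
  rw [(d.shiftData hCt.isAcyclic hi).part_of_le φ h2 ht, shiftData_fE, shiftedFE]
  obtain ht | rfl := lt_or_eq_of_le ht
  · rw [if_pos ht, d.part_of_le φ (by omega) ht, sideOpp_shifted_fE hCt hC't hi (by omega) ht]
  · rw [if_neg (lt_irrefl _), d.part_i_add_one, sideOpp_shifted_y hCt hC't hi]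

end parts

end BranchData

theorem branch_shift_quotient_eq_general {V W : Type*} [Fintype W]
    (C : SimpleGraph W) (φ : V → W) (htp : IsTreePosition C φ)
    (x y : Sym2 W) (d : BranchData C x y) (hi2 : 2 ≤ d.i) :
    ∀ d' : BranchData d.shifted (d.fE 2) x,
      d'.i = d.i ∧
      d'.part φ 0 = d.part φ 0 ∧
      d'.part φ (d.i + 2) = d.part φ (d.i + 2) ∧
      d'.part φ (d.i + 1) = d.part φ 1 ∧
      (∀ t, 1 ≤ t → t ≤ d.i → d'.part φ t = d.part φ (t + 1)) ∧
      {A : Set V | ∃ t ≤ d.i + 2, A = d'.part φ t} =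
        {A : Set V | ∃ t ≤ d.i + 2, A = d.part φ t} := by
  intro d'
  have hCt := htp.1.1
  have hC't := BranchData.shifted_isTree hCt.isAcyclic hi2 hCt
  obtain ⟨hi, hpart⟩ := BranchData.i_eq_and_part_eq hC't.isAcyclic d'
    (BranchData.encard_neighborSet_shiftData_le hCt.isAcyclic hi2 htp.1) φ
  have h0 := BranchData.part_shiftData_zero hCt hi2 hC't φ
  have hlast := BranchData.part_shiftData_i_add_two hCt hi2 hC't φ
  have hrot := BranchData.part_shiftData_i_add_one hCt hi2 hC't φ
  have hshift := fun t => BranchData.part_shiftData_of_le hCt hi2 hC't φ (t := t)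
  rw [← hpart, ← hi]
  exact ⟨rfl, h0, hlast, hrot, hshift, setOf_exists_eq_of_rotate h0 hlast hrot hshift⟩

/-- Let `(C',φ)` be the branch shift of `x` to `y` applied to a tree
position `(C,φ)` of `G`, let `Q` be the branch shift quotient graph induced from `x`, `y`,
and `(C,φ)`, and let `Q'` be the branch shift quotient graph induced from `f₂'` and `x'`
(the edges `f 2` and `x` in their new positions) and `(C',φ)`.  Then `Q' = Q`: the parts
satisfy `P' 0 = P 0`, `P' (i+2) = P (i+2)`, `P' (i+1) = P 1`, and `P' t = P (t+1)` for
`1 ≤ t ≤ i`, so the two partitions of `V` are equal and the quotient graphs coincide. -/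
theorem branch_shift_quotient_eq {V W : Type*} [Fintype V] [Fintype W]
    (w : V → V → ℝ) (hsymm : ∀ u v, w u v = w v u) (hnn : ∀ u v, 0 ≤ w u v)
    (hdiag : ∀ v, w v v = 0)
    (C : SimpleGraph W) (φ : V → W) (htp : IsTreePosition C φ)
    (x y : Sym2 W) (d : BranchData C x y) (hi2 : 2 ≤ d.i) :
    ∀ d' : BranchData d.shifted (d.fE 2) x,
      d'.i = d.i ∧
      d'.part φ 0 = d.part φ 0 ∧
      d'.part φ (d.i + 2) = d.part φ (d.i + 2) ∧
      d'.part φ (d.i + 1) = d.part φ 1 ∧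
      (∀ t, 1 ≤ t → t ≤ d.i → d'.part φ t = d.part φ (t + 1)) ∧
      {A : Set V | ∃ t ≤ d.i + 2, A = d'.part φ t} =
        {A : Set V | ∃ t ≤ d.i + 2, A = d.part φ t} :=
  branch_shift_quotient_eq_general C φ htp x y d hi2
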